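/- arXiv:1410.4878 — 2 statements merged into one kernel-verified Lean document; each statement's English description precedes it below -/
import Mathlib

section
/- Let $n \ge 2$ and let $s_0, \dots, s_n$ be positive reals with $s_k^2 \ge s_{k-1}s_{k+1}$ for $1 \le k \le n-1$. If $\left(\sum_{k=0}^n \binom{n}{k} s_k\right)^{1/n} = s_0^{1/n} + s_n^{1/n}$, then $s_k^2 = s_{k-1} s_{k+1}$ for all $1 \le k \le n-1$. -/
/-!
Log-concavity makes `k ↦ log s k` a discrete concave function, so it lies above its chord:
`s k ≥ s 0 * r ^ k` with `r = (s n / s 0) ^ (1 / n)`. Summing against binomial weights, the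
geometric sequence `s 0 * r ^ k` has volume `s 0 * (1 + r) ^ n = (s 0 ^ (1/n) + s n ^ (1/n)) ^ n`,
which by hypothesis is the volume of `s`. Hence the termwise inequalities are equalities, and
`s` is geometric.
-/

open Finset Real

lemma antitoneOn_Iio_of_succ_le {α : Type*} [Preorder α] {f : ℕ → α} {n : ℕ}
    (hf : ∀ m, m + 1 < n → f (m + 1) ≤ f m) : AntitoneOn f (Set.Iio n) := by
  intro i _ j hj hij
  induction j, hij using Nat.le_induction with
  | base => exact le_rfl
  | succ j _ ih => exact (hf j hj).trans (ih (Nat.lt_of_succ_lt hj))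

lemma natCast_mul_sum_range_le_of_antitoneOn {d : ℕ → ℝ} {n k : ℕ}
    (hd : AntitoneOn d (Set.Iio n)) (hk : k ≤ n) :
    (k : ℝ) * ∑ i ∈ range n, d i ≤ n * ∑ i ∈ range k, d i := by
  set e : ℕ → ℝ := fun i => if i ∈ range k then 1 else 0
  have he : Antitone e := fun i j hij => by
    simp only [e, mem_range]
    split_ifs <;> first | omega | norm_num
  have hrange : range n ∩ range k = range k := inter_eq_right.mpr (range_subset_range.mpr hk)
  have hsum_e : ∑ i ∈ range n, e i = k := by
    rw [sum_ite_mem (range n) (range k) fun _ => (1 : ℝ), hrange, sum_const, card_range,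
      nsmul_one]
  have hsum_ed : ∑ i ∈ range n, e i * d i = ∑ i ∈ range k, d i := by
    simp only [e, ite_mul, one_mul, zero_mul]
    rw [sum_ite_mem, hrange]
  have chebyshev := ((he.antitoneOn _).monovaryOn (coe_range n ▸ hd)).sum_mul_sum_le_card_mul_sum
  rwa [hsum_e, hsum_ed, card_range] at chebyshev

section LogConcave

variable {s : ℕ → ℝ} {n : ℕ} (hpos : ∀ k ≤ n, 0 < s k)
  (hlc : ∀ k, 1 ≤ k → k ≤ n - 1 → s (k - 1) * s (k + 1) ≤ s k ^ 2)
include hpos hlc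

lemma antitoneOn_log_succ_sub_log :
    AntitoneOn (fun i => log (s (i + 1)) - log (s i)) (Set.Iio n) := by
  refine antitoneOn_Iio_of_succ_le fun m hm => ?_
  have h := log_le_log (mul_pos (hpos m (by omega)) (hpos (m + 2) (by omega)))
    (hlc (m + 1) (by omega) (by omega))
  rw [log_mul (hpos m (by omega)).ne' (hpos (m + 2) (by omega)).ne', log_pow] at h
  push_cast at h
  linarith

lemma mul_pow_le_of_logConcave {r : ℝ} (hr : 0 < r) (hrn : s 0 * r ^ n = s n) {k : ℕ}
    (hk : k ≤ n) : s 0 * r ^ k ≤ s k := by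
  rcases Nat.eq_zero_or_pos n with rfl | hn
  · rw [Nat.le_zero.mp hk, pow_zero, mul_one]
  have hs0 := hpos 0 (Nat.zero_le n)
  have chord : (k : ℝ) * (log (s n) - log (s 0)) ≤ n * (log (s k) - log (s 0)) := by
    have := natCast_mul_sum_range_le_of_antitoneOn (antitoneOn_log_succ_sub_log hpos hlc) hk
    rwa [sum_range_sub (fun i => log (s i)), sum_range_sub (fun i => log (s i))] at this
  have hlog_r : (n : ℝ) * log r = log (s n) - log (s 0) := by
    rw [← hrn, log_mul hs0.ne' (pow_pos hr n).ne', log_pow]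
    ring
  rw [← log_le_log_iff (by positivity) (hpos k hk), log_mul hs0.ne' (pow_pos hr k).ne', log_pow]
  have : (n : ℝ) * (k * log r) ≤ n * (log (s k) - log (s 0)) := by
    rw [mul_left_comm, hlog_r]
    exact chord
  have := le_of_mul_le_mul_left this (by exact_mod_cast hn)
  linarith

end LogConcave

lemma sum_choose_mul_geom (n : ℕ) (c r : ℝ) :
    ∑ k ∈ range (n + 1), (n.choose k : ℝ) * (c * r ^ k) = c * (1 + r) ^ n := by
  rw [add_comm 1 r, add_pow, mul_sum]
  refine sum_congr rfl fun k _ => ?_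
  rw [one_pow]
  ring

lemma eq_of_le_of_sum_choose_mul_eq {n : ℕ} {f g : ℕ → ℝ} (hle : ∀ k ≤ n, f k ≤ g k)
    (hsum : ∑ k ∈ range (n + 1), (n.choose k : ℝ) * f k
      = ∑ k ∈ range (n + 1), (n.choose k : ℝ) * g k) :
    ∀ k ≤ n, f k = g k := by
  have hterm := (sum_eq_sum_iff_of_le fun k hk => mul_le_mul_of_nonneg_left
    (hle k (Nat.lt_succ_iff.mp (mem_range.mp hk))) (Nat.cast_nonneg _)).mp hsum
  intro k hk
  have hchoose : (n.choose k : ℝ) ≠ 0 := by exact_mod_cast (Nat.choose_pos hk).ne'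
  exact mul_left_cancel₀ hchoose (hterm k (mem_range.mpr (Nat.lt_succ_of_le hk)))

theorem stmt_4 (n : ℕ) (hn : 2 ≤ n) (s : ℕ → ℝ)
    (hpos : ∀ k ≤ n, 0 < s k)
    (hlc : ∀ k, 1 ≤ k → k ≤ n - 1 → s (k - 1) * s (k + 1) ≤ (s k) ^ 2)
    (hvol : (∑ k ∈ Finset.range (n + 1), (n.choose k : ℝ) * s k) ^ ((1 : ℝ) / n)
        = s 0 ^ ((1 : ℝ) / n) + s n ^ ((1 : ℝ) / n)) :
    ∀ k, 1 ≤ k → k ≤ n - 1 → (s k) ^ 2 = s (k - 1) * s (k + 1) := by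
  have hn0 : n ≠ 0 := by omega
  set A := s 0 ^ ((1 : ℝ) / n)
  set B := s n ^ ((1 : ℝ) / n)
  have root_pow {x : ℝ} (hx : 0 ≤ x) : (x ^ ((1 : ℝ) / n)) ^ n = x := by
    rw [one_div, rpow_inv_natCast_pow hx hn0]
  have hs0 := hpos 0 (Nat.zero_le n)
  have hA : 0 < A := rpow_pos_of_pos hs0 _
  set r := B / A
  have hrn : s 0 * r ^ n = s n := by
    rw [div_pow, root_pow hs0.le, root_pow (hpos n le_rfl).le]
    field_simp
  have hsum : ∑ k ∈ range (n + 1), (n.choose k : ℝ) * (s 0 * r ^ k)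
      = ∑ k ∈ range (n + 1), (n.choose k : ℝ) * s k := by
    have hvol_nonneg : 0 ≤ ∑ k ∈ range (n + 1), (n.choose k : ℝ) * s k :=
      sum_nonneg fun k hk => mul_nonneg (Nat.cast_nonneg _)
        (hpos k (Nat.lt_succ_iff.mp (mem_range.mp hk))).le
    calc ∑ k ∈ range (n + 1), (n.choose k : ℝ) * (s 0 * r ^ k)
        = (A * (1 + r)) ^ n := by rw [sum_choose_mul_geom, mul_pow, root_pow hs0.le]
      _ = (A + B) ^ n := by rw [mul_one_add, mul_div_cancel₀ _ hA.ne']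
      _ = ∑ k ∈ range (n + 1), (n.choose k : ℝ) * s k := by rw [← hvol, root_pow hvol_nonneg]
  have hgeom := eq_of_le_of_sum_choose_mul_eq (fun k hk => mul_pow_le_of_logConcave hpos hlc
    (div_pos (rpow_pos_of_pos (hpos n le_rfl) _) hA) hrn hk) hsum
  rintro k hk1 hk2
  obtain ⟨m, rfl⟩ : ∃ m, k = m + 1 := ⟨k - 1, by omega⟩
  rw [Nat.add_sub_cancel, ← hgeom m (by omega), ← hgeom (m + 1) (by omega),
    ← hgeom (m + 1 + 1) (by omega)]
  ring
end

section
/- Let $A$ and $B$ be $n \times n$ positive definite Hermitian matrices with $\det A = \det B$ and $\operatorname{tr}(B^{-1}(A-B)) = 0$. Then $A = B$. -/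
/-!
Write `B = Lᴴ L` with `L` invertible and put `C = L⁻ᴴ A L⁻¹`. Then `C` is positive definite,
`tr C = tr (B⁻¹ A) = n` and `det C = det A / det B = 1`, so the eigenvalues of `C` are
positive reals with arithmetic and geometric mean `1`. Summing `log λ ≤ λ - 1` over them
gives equality in every term, hence every eigenvalue is `1`, `C = 1` and `A = Lᴴ L = B`.
-/

open Matrix
open scoped ComplexOrder

theorem Real.eq_one_of_sum_eq_card_of_prod_eq_one {ι : Type*} [Fintype ι] {f : ι → ℝ}
    (hf : ∀ i, 0 < f i) (hsum : ∑ i, f i = Fintype.card ι) (hprod : ∏ i, f i = 1) (i : ι) :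
    f i = 1 := by
  have hgap : ∑ j, (f j - 1 - log (f j)) = 0 := by
    rw [Finset.sum_sub_distrib, Finset.sum_sub_distrib, hsum, ← log_prod fun j _ => (hf j).ne',
      hprod]
    simp
  have hgap_i := (Finset.sum_eq_zero_iff_of_nonneg fun j _ =>
    sub_nonneg.2 (log_le_sub_one_of_pos (hf j))).1 hgap i (Finset.mem_univ i)
  by_contra hi
  linarith [log_lt_sub_one_of_pos (hf i) hi]

variable {𝕜 n : Type*} [RCLike 𝕜] [Fintype n] [DecidableEq n]

theorem Matrix.IsHermitian.eq_one_of_eigenvalues_eq_one {A : Matrix n n 𝕜} (hA : A.IsHermitian)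
    (h : hA.eigenvalues = 1) : A = 1 := by
  rw [hA.spectral_theorem, h]
  simp

theorem Matrix.PosDef.eq_one_of_trace_eq_card_of_det_eq_one {A : Matrix n n 𝕜} (hA : A.PosDef)
    (htr : A.trace = Fintype.card n) (hdet : A.det = 1) : A = 1 := by
  refine hA.isHermitian.eq_one_of_eigenvalues_eq_one <| funext <|
    Real.eq_one_of_sum_eq_card_of_prod_eq_one hA.eigenvalues_pos ?_ ?_
  · exact_mod_cast hA.isHermitian.trace_eq_sum_eigenvalues.symm.trans htr
  · exact_mod_cast hA.isHermitian.det_eq_prod_eigenvalues.symm.trans hdet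

open scoped MatrixOrder in
theorem Matrix.PosDef.exists_eq_conjTranspose_mul_self {B : Matrix n n 𝕜} (hB : B.PosDef) :
    ∃ L : Matrix n n 𝕜, IsUnit L ∧ B = Lᴴ * L := by
  obtain ⟨L, hL, rfl⟩ :=
    CStarAlgebra.isStrictlyPositive_iff_eq_star_mul_self.mp hB.isStrictlyPositive
  exact ⟨L, hL, rfl⟩

theorem Matrix.PosDef.eq_of_det_eq_of_trace_inv_mul_eq_card {A B : Matrix n n 𝕜} (hA : A.PosDef)
    (hB : B.PosDef) (hdet : A.det = B.det) (htr : (B⁻¹ * A).trace = Fintype.card n) : A = B := by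
  obtain ⟨L, hL, rfl⟩ := hB.exists_eq_conjTranspose_mul_self
  set C := (L⁻¹)ᴴ * A * L⁻¹
  have hA_eq : A = Lᴴ * C * L := by
    have hL_det := (isUnit_iff_isUnit_det L).1 hL
    simp [C, mul_assoc, nonsing_inv_mul L hL_det, ← mul_assoc _ (L⁻¹)ᴴ,
      ← conjTranspose_mul]
  have hC_posDef : C.PosDef :=
    hA.conjTranspose_mul_mul_same (mulVec_injective_iff_isUnit.2 (isUnit_nonsing_inv_iff.2 hL))
  have hB_inv : (Lᴴ * L)⁻¹ = L⁻¹ * (L⁻¹)ᴴ := by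
    rw [mul_inv_rev, conjTranspose_nonsing_inv]
  have hC_trace : C.trace = Fintype.card n := by
    rw [← htr, hB_inv, trace_mul_cycle]
  have hC_det : C.det = 1 := by
    rw [det_mul_comm, ← mul_assoc, ← hB_inv, det_mul, hdet, ← det_mul,
      nonsing_inv_mul _ hB.det_pos.ne'.isUnit, det_one]
  rw [hA_eq, hC_posDef.eq_one_of_trace_eq_card_of_det_eq_one hC_trace hC_det, mul_one]

theorem stmt_8 (n : ℕ) (A B : Matrix (Fin n) (Fin n) ℂ)
    (hA : A.PosDef) (hB : B.PosDef)
    (hdet : A.det = B.det) (htr : (B⁻¹ * (A - B)).trace = 0) :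
    A = B := by
  refine hA.eq_of_det_eq_of_trace_inv_mul_eq_card hB hdet ?_
  rwa [Matrix.mul_sub, trace_sub, nonsing_inv_mul _ hB.det_pos.ne'.isUnit,
    trace_one, sub_eq_zero] at htr
end
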